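/- arXiv:2504.10864 — 4 statements merged into one kernel-verified Lean document; each statement's English description precedes it below -/
import Mathlib

section
/- For any two languages L and K over an alphabet A, if both L and K are regular then their shuffle L ⧢ K is regular. -/
/-!
Run DFAs for `L` and `K` side by side: the NFA on pairs of states in which every letter advances
exactly one of the two components accepts precisely the interleavings of a word of `L` with a word
of `K`, and the subset construction turns it into a finite DFA.
-/

/-- `IsShuffle w v u` means `u` is an interleaving of `w` and `v`. -/
inductive IsShuffle {α : Type*} : List α → List α → List α → Prop
  | nil : IsShuffle [] [] []
  | left {a : α} {w v u : List α} : IsShuffle w v u → IsShuffle (a :: w) v (a :: u)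
  | right {a : α} {w v u : List α} : IsShuffle w v u → IsShuffle w (a :: v) (a :: u)

/-- The shuffle of two languages. -/
def Language.shuffle {α : Type*} (L K : Language α) : Language α :=
  {u | ∃ w ∈ L, ∃ v ∈ K, IsShuffle w v u}

theorem isShuffle_nil_iff {α : Type*} {w v : List α} : IsShuffle w v [] ↔ w = [] ∧ v = [] := by
  constructor
  · rintro ⟨⟩
    exact ⟨rfl, rfl⟩
  · rintro ⟨rfl, rfl⟩
    exact .nil

namespace DFA

variable {α σ₁ σ₂ : Type*}

@[simps]
def shuffle (M₁ : DFA α σ₁) (M₂ : DFA α σ₂) : NFA α (σ₁ × σ₂) where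
  step p a := {(M₁.step p.1 a, p.2), (p.1, M₂.step p.2 a)}
  start := {(M₁.start, M₂.start)}
  accept := M₁.accept ×ˢ M₂.accept

theorem mem_shuffle_evalFrom_singleton {M₁ : DFA α σ₁} {M₂ : DFA α σ₂} {u : List α}
    {p s : σ₁ × σ₂} : s ∈ (M₁.shuffle M₂).evalFrom {p} u ↔
      ∃ w v, IsShuffle w v u ∧ M₁.evalFrom p.1 w = s.1 ∧ M₂.evalFrom p.2 v = s.2 := by
  induction u generalizing p with
  | nil => simp [isShuffle_nil_iff, Prod.ext_iff, eq_comm]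
  | cons a u ih =>
    rw [NFA.evalFrom_cons, NFA.stepSet_singleton, shuffle_step, Set.insert_eq,
      NFA.evalFrom_union, Set.mem_union, ih, ih]
    constructor
    · rintro (⟨w, v, h, hw, hv⟩ | ⟨w, v, h, hw, hv⟩)
      · exact ⟨a :: w, v, h.left, hw, hv⟩
      · exact ⟨w, a :: v, h.right, hw, hv⟩
    · rintro ⟨_, _, _ | ⟨h⟩ | ⟨h⟩, hw, hv⟩
      · exact .inl ⟨_, _, h, hw, hv⟩
      · exact .inr ⟨_, _, h, hw, hv⟩

theorem shuffle_accepts (M₁ : DFA α σ₁) (M₂ : DFA α σ₂) :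
    (M₁.shuffle M₂).accepts = M₁.accepts.shuffle M₂.accepts := by
  ext u
  simp only [NFA.mem_accepts, shuffle_start, shuffle_accept, mem_shuffle_evalFrom_singleton]
  constructor
  · rintro ⟨⟨s₁, s₂⟩, ⟨hs₁, hs₂⟩, w, v, h, rfl, rfl⟩
    exact ⟨w, hs₁, v, hs₂, h⟩
  · rintro ⟨w, hw, v, hv, h⟩
    exact ⟨(M₁.eval w, M₂.eval v), ⟨hw, hv⟩, w, v, h, rfl, rfl⟩

end DFA

/-- The shuffle of two regular languages is regular. -/
theorem shuffle_regular {α : Type*} (L K : Language α)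
    (hL : L.IsRegular) (hK : K.IsRegular) : (L.shuffle K).IsRegular := by
  obtain ⟨σ₁, _, M₁, rfl⟩ := hL
  obtain ⟨σ₂, _, M₂, rfl⟩ := hK
  refine ⟨_, Fintype.ofFinite _, (M₁.shuffle M₂).toDFA, ?_⟩
  rw [NFA.toDFA_correct, DFA.shuffle_accepts]
end

section
/- The shuffle product automaton of two finite automata A' and A'' accepts exactly the shuffle of the languages accepted by A' and A'': L(A' ⧢ A'') = L(A') ⧢ L(A''). -/
/-- The shuffle product automaton of two automata. -/
def NFA.shuffleProd {α σ τ : Type*} (M : NFA α σ) (N : NFA α τ) : NFA α (σ × τ) where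
  step p a := (fun q => (q, p.2)) '' M.step p.1 a ∪ (fun q => (p.1, q)) '' N.step p.2 a
  start := M.start ×ˢ N.start
  accept := M.accept ×ˢ N.accept

private lemma evalFrom_pt {α σ : Type*} (M : NFA α σ) :
    ∀ (w : List α) (S : Set σ) (q : σ),
      q ∈ M.evalFrom S w ↔ ∃ p ∈ S, q ∈ M.evalFrom {p} w := by
  intro w
  induction w with
  | nil => simp [NFA.evalFrom]
  | cons a w ih =>
    intro S q
    show q ∈ M.evalFrom (M.stepSet S a) w ↔ _
    rw [ih]
    constructor
    · rintro ⟨r, hr, hq⟩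
      rw [NFA.mem_stepSet] at hr
      obtain ⟨p, hp, hr⟩ := hr
      refine ⟨p, hp, ?_⟩
      show q ∈ M.evalFrom (M.stepSet {p} a) w
      rw [ih]
      exact ⟨r, by rw [NFA.mem_stepSet]; exact ⟨p, rfl, hr⟩, hq⟩
    · rintro ⟨p, hp, hq⟩
      rw [show M.evalFrom {p} (a :: w) = M.evalFrom (M.stepSet {p} a) w from rfl, ih] at hq
      obtain ⟨r, hr, hq⟩ := hq
      rw [NFA.mem_stepSet] at hr
      simp only [Set.mem_singleton_iff, exists_eq_left] at hr
      exact ⟨r, by rw [NFA.mem_stepSet]; exact ⟨p, hp, hr⟩, hq⟩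

private lemma shuffle_eval {α σ τ : Type*} (M : NFA α σ) (N : NFA α τ) :
    ∀ (u : List α) (p : σ) (q : τ) (p' : σ) (q' : τ),
      ((p', q') ∈ (M.shuffleProd N).evalFrom {(p, q)} u ↔
        ∃ w v, IsShuffle w v u ∧ p' ∈ M.evalFrom {p} w ∧ q' ∈ N.evalFrom {q} v) := by
  intro u
  induction u with
  | nil =>
    intro p q p' q'
    simp only [NFA.evalFrom_nil, Set.mem_singleton_iff, Prod.mk.injEq]
    constructor
    · rintro ⟨rfl, rfl⟩
      exact ⟨[], [], IsShuffle.nil, by simp [NFA.evalFrom], by simp [NFA.evalFrom]⟩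
    · rintro ⟨w, v, hs, hw, hv⟩
      cases hs
      simp [NFA.evalFrom] at hw hv
      exact ⟨hw, hv⟩
  | cons a u ih =>
    intro p q p' q'
    constructor
    · intro h
      rw [show (M.shuffleProd N).evalFrom {(p, q)} (a :: u)
            = (M.shuffleProd N).evalFrom ((M.shuffleProd N).stepSet {(p, q)} a) u from rfl,
          evalFrom_pt] at h
      obtain ⟨r, hr, h⟩ := h
      rw [NFA.mem_stepSet] at hr
      obtain ⟨s, hs, hr⟩ := hr
      simp only [Set.mem_singleton_iff] at hs
      subst hs
      rcases hr with ⟨m, hm, rfl⟩ | ⟨n, hn, rfl⟩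
      · obtain ⟨w, v, hsh, hw, hv⟩ := (ih _ _ _ _).mp h
        refine ⟨a :: w, v, IsShuffle.left hsh, ?_, hv⟩
        show p' ∈ M.evalFrom (M.stepSet {p} a) w
        rw [evalFrom_pt]
        exact ⟨m, by rw [NFA.mem_stepSet]; exact ⟨p, rfl, hm⟩, hw⟩
      · obtain ⟨w, v, hsh, hw, hv⟩ := (ih _ _ _ _).mp h
        refine ⟨w, a :: v, IsShuffle.right hsh, hw, ?_⟩
        show q' ∈ N.evalFrom (N.stepSet {q} a) v
        rw [evalFrom_pt]
        exact ⟨n, by rw [NFA.mem_stepSet]; exact ⟨q, rfl, hn⟩, hv⟩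
    · rintro ⟨w, v, hsh, hw, hv⟩
      cases hsh with
      | left hsh' =>
        rename_i w'
        rw [show M.evalFrom {p} (a :: w') = M.evalFrom (M.stepSet {p} a) w' from rfl,
            evalFrom_pt] at hw
        obtain ⟨m, hm, hw⟩ := hw
        rw [NFA.mem_stepSet] at hm
        simp only [Set.mem_singleton_iff, exists_eq_left] at hm
        have := (ih m q p' q').mpr ⟨_, _, hsh', hw, hv⟩
        show (p', q') ∈ (M.shuffleProd N).evalFrom ((M.shuffleProd N).stepSet {(p, q)} a) u
        rw [evalFrom_pt]
        refine ⟨(m, q), ?_, this⟩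
        rw [NFA.mem_stepSet]
        exact ⟨(p, q), rfl, Or.inl ⟨m, hm, rfl⟩⟩
      | right hsh' =>
        rename_i v'
        rw [show N.evalFrom {q} (a :: v') = N.evalFrom (N.stepSet {q} a) v' from rfl,
            evalFrom_pt] at hv
        obtain ⟨n, hn, hv⟩ := hv
        rw [NFA.mem_stepSet] at hn
        simp only [Set.mem_singleton_iff, exists_eq_left] at hn
        have := (ih p n p' q').mpr ⟨_, _, hsh', hw, hv⟩
        show (p', q') ∈ (M.shuffleProd N).evalFrom ((M.shuffleProd N).stepSet {(p, q)} a) u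
        rw [evalFrom_pt]
        refine ⟨(p, n), ?_, this⟩
        rw [NFA.mem_stepSet]
        exact ⟨(p, q), rfl, Or.inr ⟨n, hn, rfl⟩⟩

/-- The shuffle product automaton accepts exactly the shuffle of the accepted languages. -/
theorem shuffleProd_accepts {α σ τ : Type*} (M : NFA α σ) (N : NFA α τ) :
    (M.shuffleProd N).accepts = M.accepts.shuffle N.accepts := by
  ext u
  rw [NFA.mem_accepts]
  constructor
  · rintro ⟨⟨p', q'⟩, hacc, hev⟩
    rw [evalFrom_pt] at hev
    obtain ⟨⟨p, q⟩, hstart, hev⟩ := hev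
    obtain ⟨w, v, hsh, hw, hv⟩ := (shuffle_eval M N u p q p' q').mp hev
    obtain ⟨hp, hq⟩ := hstart
    obtain ⟨hp', hq'⟩ := hacc
    refine ⟨w, ?_, v, ?_, hsh⟩
    · rw [NFA.mem_accepts]
      exact ⟨p', hp', (evalFrom_pt M w M.start p').mpr ⟨p, hp, hw⟩⟩
    · rw [NFA.mem_accepts]
      exact ⟨q', hq', (evalFrom_pt N v N.start q').mpr ⟨q, hq, hv⟩⟩
  · rintro ⟨w, hw, v, hv, hsh⟩
    rw [NFA.mem_accepts] at hw hv
    obtain ⟨p', hp', hw⟩ := hw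
    obtain ⟨q', hq', hv⟩ := hv
    rw [evalFrom_pt] at hw hv
    obtain ⟨p, hp, hw⟩ := hw
    obtain ⟨q, hq, hv⟩ := hv
    refine ⟨(p', q'), ⟨hp', hq'⟩, ?_⟩
    rw [evalFrom_pt]
    exact ⟨(p, q), ⟨hp, hq⟩, (shuffle_eval M N u p q p' q').mpr ⟨w, v, hsh, hw, hv⟩⟩
end

section
/- Every atomic resimple expression denotes a recognizable subset of ℕ^k; concretely, if R = γ + B^⊕ where B is a free basis all of whose elements are of the form n·e_j (n > 0), then the set denoted by R equals a product S₁ × ⋯ × S_k of subsets of ℕ, where S_j = c_j + p_j·ℕ if p_j·e_j ∈ B and S_j = {c_j} otherwise (with γ = (c₁,…,c_k)). -/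
/-- A finite subset `B` of `ℕ^k` is a free basis if nonnegative integer combinations of its
elements are unique. -/
def FreeBasis {k : ℕ} (B : Finset (Fin k → ℕ)) : Prop :=
  ∀ c d : (Fin k → ℕ) → ℕ,
    (∑ b ∈ B, c b • b) = (∑ b ∈ B, d b • b) → ∀ b ∈ B, c b = d b

/-!
Since every element of `B` lives on a single coordinate, the submonoid `B^⊕` splits as the
product over `j` of the submonoids of `ℕ` generated by `{n | n • e_j ∈ B}`. Freeness forbids two
distinct `j`-primary elements `p • e_j` and `q • e_j` (as `q • (p • e_j) = p • (q • e_j)`), so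
each factor is either `p • ℕ` or `{0}`.
-/

namespace AddSubmonoid

variable {ι : Type*} [DecidableEq ι]

theorem mem_closure_iff_forall_apply_mem_closure [Fintype ι] {M : Type*} [AddCommMonoid M]
    {B : Set (ι → M)}
    (hB : ∀ b ∈ B, ∃ i m, b = Pi.single i m) {x : ι → M} :
    x ∈ closure B ↔ ∀ i, x i ∈ closure {m | Pi.single i m ∈ B} := by
  constructor
  · intro hx i
    induction hx using closure_induction with
    | mem b hb =>
      obtain ⟨i', m, rfl⟩ := hB b hb
      by_cases hi : i = i'
      · subst hi
        exact subset_closure (by simpa using hb)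
      · simp [Pi.single_eq_of_ne hi, zero_mem]
    | zero => exact zero_mem _
    | add y z _ _ hy hz => exact add_mem hy hz
  · intro hx
    rw [← Finset.univ_sum_single x]
    refine sum_mem _ fun i _ => ?_
    have hle : closure {m | Pi.single i m ∈ B} ≤ (closure B).comap (AddMonoidHom.single _ i) :=
      closure_le.mpr fun m hm => subset_closure hm
    exact hle (hx i)

theorem closure_setOf_single_mem_eq_bot {B : Set (ι → ℕ)} {j : ι}
    (h : ∀ p, 0 < p → Pi.single j p ∉ B) : closure {n | Pi.single j n ∈ B} = ⊥ :=
  eq_bot_iff.mpr <| closure_le.mpr fun n hn =>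
    mem_bot.mpr <| Nat.eq_zero_of_not_pos fun hn0 => h n hn0 hn

end AddSubmonoid

namespace FreeBasis

variable {k : ℕ} {B : Finset (Fin k → ℕ)}

theorem eq_of_nsmul_eq_nsmul (hfree : FreeBasis B) {b b' : Fin k → ℕ} (hb : b ∈ B)
    (hb' : b' ∈ B) {m n : ℕ} (hm : 0 < m) (h : m • b = n • b') : b = b' := by
  by_contra hne
  have hsum (a : Fin k → ℕ) (ha : a ∈ B) (r : ℕ) :
      ∑ x ∈ B, (Pi.single a r : (Fin k → ℕ) → ℕ) x • x = r • a := by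
    rw [Finset.sum_eq_single_of_mem a ha fun x _ hx => by simp [Pi.single_eq_of_ne hx]]
    simp
  have := hfree (Pi.single b m) (Pi.single b' n) (by rw [hsum b hb, hsum b' hb', h]) b hb
  simp only [Pi.single_eq_same, Pi.single_eq_of_ne hne] at this
  exact hm.ne' this

theorem eq_of_single_mem (hfree : FreeBasis B) {j : Fin k} {p q : ℕ} (hp : 0 < p)
    (hpB : Pi.single j p ∈ B) (hqB : Pi.single j q ∈ B) : p = q := by
  refine (Pi.single_injective j (hfree.eq_of_nsmul_eq_nsmul hqB hpB hp (n := q) ?_)).symm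
  rw [← Pi.single_smul', ← Pi.single_smul', smul_eq_mul, smul_eq_mul, mul_comm]

theorem closure_setOf_single_mem (hfree : FreeBasis B) {j : Fin k} {p : ℕ}
    (hpB : Pi.single j p ∈ B) :
    AddSubmonoid.closure {n | Pi.single j n ∈ (B : Set (Fin k → ℕ))} =
      AddSubmonoid.closure {p} := by
  refine le_antisymm (AddSubmonoid.closure_le.mpr fun n hn => ?_)
    (AddSubmonoid.closure_mono (Set.singleton_subset_iff.mpr hpB))
  obtain rfl | hn0 := n.eq_zero_or_pos
  · exact zero_mem _
  · rw [hfree.eq_of_single_mem hn0 hn hpB]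
    exact AddSubmonoid.subset_closure rfl

theorem exists_mem_closure_setOf_single_mem_add_iff (hfree : FreeBasis B) (j : Fin k) (c s : ℕ) :
    (∃ t, t ∈ AddSubmonoid.closure {n | Pi.single j n ∈ (B : Set (Fin k → ℕ))} ∧ s = c + t) ↔
      (∃ p n, 0 < p ∧ Pi.single j p ∈ B ∧ s = c + n * p) ∨
        ((∀ p, 0 < p → Pi.single j p ∉ B) ∧ s = c) := by
  by_cases hj : ∃ p, 0 < p ∧ Pi.single j p ∈ B
  · obtain ⟨p, hp, hpB⟩ := hj
    simp only [hfree.closure_setOf_single_mem hpB, AddSubmonoid.mem_closure_singleton,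
      smul_eq_mul]
    constructor
    · rintro ⟨_, ⟨n, rfl⟩, hs⟩
      exact Or.inl ⟨p, n, hp, hpB, hs⟩
    · rintro (⟨q, n, hq, hqB, hs⟩ | ⟨hnone, -⟩)
      · exact ⟨n * p, ⟨n, rfl⟩, by rw [hs, hfree.eq_of_single_mem hq hqB hpB]⟩
      · exact absurd hpB (hnone p hp)
  · simp only [not_exists, not_and] at hj
    rw [AddSubmonoid.closure_setOf_single_mem_eq_bot (B := (B : Set (Fin k → ℕ))) hj]
    constructor
    · rintro ⟨t, ht, hs⟩
      rw [AddSubmonoid.mem_bot] at ht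
      exact Or.inr ⟨hj, by rw [hs, ht, add_zero]⟩
    · rintro (⟨p, _, hp, hpB, _⟩ | ⟨-, hs⟩)
      · exact absurd hpB (hj p hp)
      · exact ⟨0, zero_mem _, hs⟩

end FreeBasis

/-- An atomic resimple expression `γ + B^⊕`, with `B` a free basis of primary elements,
denotes the product over coordinates `j` of the sets `S_j`, where `S_j = γ j + p·ℕ`
if `p·e_j ∈ B` and `S_j = {γ j}` otherwise.  In particular it is recognizable. -/
theorem atomicResimple_denotes_product {k : ℕ} (γ : Fin k → ℕ) (B : Finset (Fin k → ℕ))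
    (hfree : FreeBasis B)
    (hprim : ∀ b ∈ B, ∃ j n, 0 < n ∧ b = Pi.single j n) :
    {σ : Fin k → ℕ | ∃ b ∈ AddSubmonoid.closure (B : Set (Fin k → ℕ)), σ = γ + b} =
      {σ : Fin k → ℕ | ∀ j,
        (∃ p n, 0 < p ∧ (Pi.single j p : Fin k → ℕ) ∈ B ∧ σ j = γ j + n * p) ∨
        ((∀ p, 0 < p → (Pi.single j p : Fin k → ℕ) ∉ B) ∧ σ j = γ j)} := by
  have hsingle : ∀ b ∈ (B : Set (Fin k → ℕ)), ∃ j n, b = Pi.single j n := fun b hb =>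
    let ⟨j, n, _, hb⟩ := hprim b hb; ⟨j, n, hb⟩
  ext σ
  simp only [Set.mem_ofPred_eq, AddSubmonoid.mem_closure_iff_forall_apply_mem_closure hsingle,
    funext_iff, Pi.add_apply, ← forall_and]
  exact (Classical.skolem (p := fun j t => t ∈ _ ∧ σ j = γ j + t)).symm.trans
    (forall_congr' fun j => hfree.exists_mem_closure_setOf_single_mem_add_iff j (γ j) (σ j))
end

section
/- If S ⊆ ℕ^k is recognizable then its Parikh preimage φ⁻¹(S) ⊆ A* is regular, and consequently S = φ(φ⁻¹(S)) is rational; hence every recognizable subset of ℕ^k is rational. -/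
open Pointwise

/-- Rational subsets of `ℕ^k`: built from finite sets by union, pointwise addition and
submonoid generation (star). -/
inductive IsRat {k : ℕ} : Set (Fin k → ℕ) → Prop
  | of_finite {s : Set (Fin k → ℕ)} : s.Finite → IsRat s
  | union {s t : Set (Fin k → ℕ)} : IsRat s → IsRat t → IsRat (s ∪ t)
  | add {s t : Set (Fin k → ℕ)} : IsRat s → IsRat t → IsRat (s + t)
  | star {s : Set (Fin k → ℕ)} : IsRat s → IsRat (AddSubmonoid.closure s : Set (Fin k → ℕ))

/-- The Parikh map over the alphabet `Fin k`. -/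
def parikh {k : ℕ} (w : List (Fin k)) : Fin k → ℕ := fun j => w.count j

/-- A subset of `ℕ^k` is recognizable if its Parikh preimage is a regular language. -/
def Recognizable {k : ℕ} (S : Set (Fin k → ℕ)) : Prop :=
  Language.IsRegular {w : List (Fin k) | parikh w ∈ S}

/-! Two vectors `x, y` are syntactically equivalent for `S` when `x + z ∈ S ↔ y + z ∈ S`
for all `z`. If `S` is recognizable, the class of `x` is determined by the state a DFA for
`φ⁻¹(S)` reaches on the word `a₁^{x₁} ⋯ a_k^{x_k}`, so there are finitely many classes. By
pigeonhole there are `T` and `P > 0` with `T eᵢ ~ (T + P) eᵢ` for every letter `i`, hence adding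
`P eᵢ` to a vector whose `i`-th coordinate is at least `T` does not change its class. Every vector
is then equivalent to its reduction `c` with all coordinates below `T + P`, and
`S = ⋃ (c + ⟨P eᵢ | T ≤ cᵢ⟩*)` over the finitely many reduced `c ∈ S`. -/

def SyntacticEquiv {M : Type*} [Add M] (S : Set M) (x y : M) : Prop :=
  ∀ z, x + z ∈ S ↔ y + z ∈ S

namespace SyntacticEquiv

variable {M : Type*} {S : Set M} {x y w : M}

theorem trans [Add M] (h₁ : SyntacticEquiv S x y) (h₂ : SyntacticEquiv S y w) :
    SyntacticEquiv S x w :=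
  fun z => (h₁ z).trans (h₂ z)

theorem add_right [AddSemigroup M] (h : SyntacticEquiv S x y) (w : M) :
    SyntacticEquiv S (x + w) (y + w) := by
  intro z
  simpa only [add_assoc] using h (w + z)

theorem mem_iff [AddZeroClass M] (h : SyntacticEquiv S x y) : x ∈ S ↔ y ∈ S := by
  simpa only [add_zero] using h 0

end SyntacticEquiv

theorem Nat.exists_eq_add_mul_of_lt_add {T P : ℕ} (hP : 0 < P) (n : ℕ) :
    ∃ r q, r < T + P ∧ n = r + q * P ∧ (r < T → q = 0) := by
  by_cases hn : n < T
  · exact ⟨n, 0, by omega, by simp, fun _ => rfl⟩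
  · have := Nat.mod_lt (n - T) hP
    have := Nat.div_add_mod' (n - T) P
    exact ⟨T + (n - T) % P, (n - T) / P, by omega, by omega, by omega⟩

section Periodic

variable {ι : Type*} [DecidableEq ι] {S : Set (ι → ℕ)} {T P : ℕ}

theorem syntacticEquiv_add_single_of_le
    (hper : ∀ i, SyntacticEquiv S (Pi.single i T) (Pi.single i (T + P)))
    {x : ι → ℕ} {i : ι} (hx : T ≤ x i) : SyntacticEquiv S x (x + Pi.single i P) := by
  have h := (hper i).add_right (x - Pi.single i T)
  have hx₁ : Pi.single i T + (x - Pi.single i T) = x := by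
    ext j; rcases eq_or_ne j i with rfl | hj <;> simp [*]
  have hx₂ : Pi.single i (T + P) + (x - Pi.single i T) = x + Pi.single i P := by
    ext j; rcases eq_or_ne j i with rfl | hj <;> simp [*]; omega
  rwa [hx₁, hx₂] at h

def periodSubmonoid (T P : ℕ) (c : ι → ℕ) : AddSubmonoid (ι → ℕ) :=
  AddSubmonoid.closure ((fun i => Pi.single i P) '' {i | T ≤ c i})

theorem syntacticEquiv_add_of_mem_periodSubmonoid
    (hper : ∀ i, SyntacticEquiv S (Pi.single i T) (Pi.single i (T + P)))
    {c g : ι → ℕ} (hg : g ∈ periodSubmonoid T P c) : SyntacticEquiv S c (c + g) := by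
  -- Generalized to every `y` that is at least `T` wherever `c` is: that survives adding `g`.
  suffices H : ∀ y : ι → ℕ, (∀ i, T ≤ c i → T ≤ y i) → SyntacticEquiv S y (y + g) from
    H c fun _ => id
  induction hg using AddSubmonoid.closure_induction with
  | mem g hg =>
    obtain ⟨i, hi, rfl⟩ := hg
    exact fun y hy => syntacticEquiv_add_single_of_le hper (hy i hi)
  | zero => simp [SyntacticEquiv]
  | add g h _ _ ihg ihh =>
    intro y hy
    have hyg : ∀ i, T ≤ c i → T ≤ (y + g) i := fun i hi => (hy i hi).trans (by simp)
    simpa only [add_assoc] using (ihg y hy).trans (ihh (y + g) hyg)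

theorem exists_eq_add_mem_periodSubmonoid [Fintype ι] (hP : 0 < P) (x : ι → ℕ) :
    ∃ c g, (∀ i, c i < T + P) ∧ g ∈ periodSubmonoid T P c ∧ x = c + g := by
  choose r q hr hx hq using fun i => Nat.exists_eq_add_mul_of_lt_add (T := T) hP (x i)
  refine ⟨r, ∑ i, q i • Pi.single i P, hr, AddSubmonoid.sum_mem _ fun i _ => ?_, ?_⟩
  · by_cases hi : T ≤ r i
    · have hgen : Pi.single i P ∈ periodSubmonoid T P r :=
        AddSubmonoid.subset_closure ⟨i, hi, rfl⟩
      exact AddSubmonoid.nsmul_mem _ hgen _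
    · simp [hq i (not_le.mp hi)]
  · ext j
    simp [Finset.sum_apply, Pi.single_apply, hx j]

theorem exists_syntacticEquiv_single_of_finite [Finite ι] {σ : Type*} [Finite σ]
    (f : (ι → ℕ) → σ) (hf : ∀ x y, f x = f y → SyntacticEquiv S x y) :
    ∃ T P, 0 < P ∧ ∀ i, SyntacticEquiv S (Pi.single i T) (Pi.single i (T + P)) := by
  obtain ⟨T, U, hTU, h⟩ := Set.finite_univ.exists_lt_map_eq_of_forall_mem
    (f := fun n : ℕ => fun i => f (Pi.single i n)) (fun _ => Set.mem_univ _)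
  refine ⟨T, U - T, by omega, fun i => ?_⟩
  rw [Nat.add_sub_cancel' hTU.le]
  exact hf _ _ (congrFun h i)

end Periodic

section Rational

variable {k : ℕ}

theorem IsRat.biUnion {ι : Type*} {s : Set ι} (hs : s.Finite) {f : ι → Set (Fin k → ℕ)}
    (hf : ∀ i ∈ s, IsRat (f i)) : IsRat (⋃ i ∈ s, f i) := by
  induction s, hs using Set.Finite.induction_on with
  | empty => simpa using IsRat.of_finite Set.finite_empty
  | @insert a s _ _ ih =>
    rw [Set.biUnion_insert]
    exact (hf a (Set.mem_insert a s)).union (ih fun i hi => hf i (Set.mem_insert_of_mem a hi))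

theorem isRat_of_syntacticEquiv_single {S : Set (Fin k → ℕ)} {T P : ℕ} (hP : 0 < P)
    (hper : ∀ i, SyntacticEquiv S (Pi.single i T) (Pi.single i (T + P))) : IsRat S := by
  have hS : S = ⋃ c ∈ {c ∈ S | ∀ i, c i < T + P}, {c} + (periodSubmonoid T P c : Set _) := by
    ext x
    simp only [Set.mem_iUnion, Set.singleton_add, Set.mem_image, SetLike.mem_coe, exists_prop]
    constructor
    · intro hx
      obtain ⟨c, g, hc, hg, rfl⟩ := exists_eq_add_mem_periodSubmonoid hP x
      have hcS := (syntacticEquiv_add_of_mem_periodSubmonoid hper hg).mem_iff.mpr hx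
      exact ⟨c, ⟨hcS, hc⟩, g, hg, rfl⟩
    · rintro ⟨c, ⟨hcS, -⟩, g, hg, rfl⟩
      exact (syntacticEquiv_add_of_mem_periodSubmonoid hper hg).mem_iff.mp hcS
  have hfin : {c ∈ S | ∀ i, c i < T + P}.Finite :=
    (Set.Finite.pi' fun _ => Set.finite_Iio (T + P)).subset fun _ hc => hc.2
  rw [hS]
  exact IsRat.biUnion hfin fun c _ =>
    (IsRat.of_finite (Set.finite_singleton c)).add (IsRat.of_finite (Set.toFinite _)).star

end Rational

section Parikh

variable {k : ℕ}

def parikhWord (x : Fin k → ℕ) : List (Fin k) :=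
  (List.finRange k).flatMap fun i => List.replicate (x i) i

theorem parikh_parikhWord (x : Fin k → ℕ) : parikh (parikhWord x) = x := by
  ext j
  rw [parikh, parikhWord, List.count_flatMap, ← Fin.sum_univ_def,
    Finset.sum_eq_single j (fun i _ hij => by simp [List.count_replicate, hij]) (by simp)]
  simp

theorem parikh_append (u v : List (Fin k)) : parikh (u ++ v) = parikh u + parikh v := by
  ext j; simp [parikh, List.count_append]

theorem syntacticEquiv_of_eval_parikhWord_eq {S : Set (Fin k → ℕ)} {σ : Type*} {M : DFA (Fin k) σ}
    (hM : M.accepts = {w | parikh w ∈ S}) {x y : Fin k → ℕ}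
    (h : M.eval (parikhWord x) = M.eval (parikhWord y)) : SyntacticEquiv S x y := by
  have hmem : ∀ x z,
      x + z ∈ S ↔ M.evalFrom (M.eval (parikhWord x)) (parikhWord z) ∈ M.accept := by
    intro x z
    rw [DFA.eval, ← DFA.evalFrom_of_append, ← DFA.eval, ← DFA.mem_accepts, hM]
    change _ ↔ parikh (parikhWord x ++ parikhWord z) ∈ S
    rw [parikh_append, parikh_parikhWord, parikh_parikhWord]
  intro z
  rw [hmem, hmem, h]

end Parikh

/-- If `S ⊆ ℕ^k` is recognizable then its Parikh preimage is regular, `S` is the Parikh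
image of that preimage, and consequently `S` is rational. -/
theorem recognizable_isRat {k : ℕ} (S : Set (Fin k → ℕ)) (hS : Recognizable S) :
    Language.IsRegular {w : List (Fin k) | parikh w ∈ S} ∧
      S = {x : Fin k → ℕ | ∃ w ∈ {w : List (Fin k) | parikh w ∈ S}, x = parikh w} ∧
      IsRat S := by
  refine ⟨hS, ?_, ?_⟩
  · ext x
    refine ⟨fun hx => ⟨parikhWord x, ?_, (parikh_parikhWord x).symm⟩, fun ⟨w, hw, hx⟩ => hx ▸ hw⟩
    rwa [Set.mem_ofPred_eq, parikh_parikhWord]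
  · obtain ⟨σ, _, M, hM⟩ := hS
    obtain ⟨T, P, hP, hper⟩ := exists_syntacticEquiv_single_of_finite
      (fun x => M.eval (parikhWord x)) fun _ _ => syntacticEquiv_of_eval_parikhWord_eq hM
    exact isRat_of_syntacticEquiv_single hP hper
end
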